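/- The number of idempotent elements of the semigroup P_n of partial transformations on {1,...,n} equals the sum over k from 0 to n of binomial(n,k) * (k+1)^(n-k). -/

import Mathlib

/-- Composition of partial transformations on `{1,…,n}`, encoded as functions
`Fin n → Option (Fin n)` (`none` = undefined): `pcomp f g = f ∘ g`. -/
def pcomp {n : ℕ} (f g : Fin n → Option (Fin n)) : Fin n → Option (Fin n) :=
  fun x => (g x).bind f

/-! An idempotent partial map `e` is the identity on its image `s = {y | e y = some y}` and is
arbitrary elsewhere: each `x ∉ s` is either left undefined or sent into `s`. Hence the idempotents
with image `s` correspond to maps `sᶜ → Option s`, of which there are `(#s + 1) ^ (n - #s)`, and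
grouping the images by size gives the binomial coefficients. -/

open Finset

section PartialMap

variable {α : Type*}

def FixesRange (e : α → Option α) : Prop :=
  ∀ x y, e x = some y → e y = some y

theorem bind_self_eq_self_iff_fixesRange {e : α → Option α} :
    (fun x => (e x).bind e) = e ↔ FixesRange e := by
  refine ⟨fun h x y hxy => ?_, fun h => funext fun x => ?_⟩
  · simpa [hxy] using congrFun h x
  · cases hx : e x with
    | none => rfl
    | some y => simpa using h x y hx

variable [DecidableEq α]

def partialFixedPoints [Fintype α] (e : α → Option α) : Finset α :=
  {y | e y = some y}

theorem mem_partialFixedPoints [Fintype α] {e : α → Option α} {y : α} :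
    y ∈ partialFixedPoints e ↔ e y = some y := by
  simp [partialFixedPoints]

def extendById (s : Finset α) (g : {x // x ∉ s} → Option s) : α → Option α :=
  fun x => if h : x ∈ s then some x else (g ⟨x, h⟩).map Subtype.val

section ExtendById

variable {s : Finset α} {g : {x // x ∉ s} → Option s}

theorem extendById_of_mem {x : α} (hx : x ∈ s) : extendById s g x = some x :=
  dif_pos hx

theorem extendById_of_not_mem {x : α} (hx : x ∉ s) :
    extendById s g x = (g ⟨x, hx⟩).map Subtype.val :=
  dif_neg hx

theorem mem_of_extendById_eq_some {x y : α} (h : extendById s g x = some y) : y ∈ s := by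
  by_cases hx : x ∈ s
  · rw [extendById_of_mem hx, Option.some_inj] at h
    exact h ▸ hx
  · rw [extendById_of_not_mem hx, Option.map_eq_some_iff] at h
    obtain ⟨z, -, rfl⟩ := h
    exact z.2

theorem fixesRange_extendById : FixesRange (extendById s g) :=
  fun _ _ h => extendById_of_mem (mem_of_extendById_eq_some h)

theorem partialFixedPoints_extendById [Fintype α] : partialFixedPoints (extendById s g) = s := by
  ext y
  exact ⟨fun hy => mem_of_extendById_eq_some (mem_partialFixedPoints.mp hy),
    fun hy => mem_partialFixedPoints.mpr (extendById_of_mem hy)⟩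

end ExtendById

variable [Fintype α]

def fixesRangeFiberEquiv (s : Finset α) :
    {e : {e : α → Option α // FixesRange e} //
      partialFixedPoints e.1 = s} ≃ ({x // x ∉ s} → Option s) where
  toFun e x := (e.1.1 x).bind fun y => if hy : y ∈ s then some ⟨y, hy⟩ else none
  invFun g := ⟨⟨extendById s g, fixesRange_extendById⟩, partialFixedPoints_extendById⟩
  left_inv := by
    rintro ⟨⟨e, he⟩, rfl⟩
    refine Subtype.ext (Subtype.ext (funext fun x => ?_))
    dsimp only
    by_cases hx : x ∈ partialFixedPoints e
    · exact (extendById_of_mem hx).trans (mem_partialFixedPoints.mp hx).symm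
    · rw [extendById_of_not_mem hx]
      cases hex : e x with
      | none => rfl
      | some y =>
        have hy : y ∈ partialFixedPoints e := mem_partialFixedPoints.mpr (he x y hex)
        simp [hy]
  right_inv g := funext fun ⟨x, hx⟩ => by
    simp only [extendById_of_not_mem hx]
    cases g ⟨x, hx⟩ with
    | none => rfl
    | some y => simp [y.2]

def fixesRangeEquivSigma :
    {e : α → Option α // FixesRange e} ≃
      Σ s : Finset α, ({x // x ∉ s} → Option s) :=
  (Equiv.sigmaFiberEquiv fun e => partialFixedPoints e.1).symm.trans
    (Equiv.sigmaCongrRight fixesRangeFiberEquiv)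

theorem card_fixesRange :
    Nat.card {e : α → Option α // FixesRange e} =
      ∑ s : Finset α, (#s + 1) ^ (Fintype.card α - #s) := by
  rw [Nat.card_congr fixesRangeEquivSigma, Nat.card_eq_fintype_card, Fintype.card_sigma]
  refine sum_congr rfl fun s _ => ?_
  rw [Fintype.card_fun, Fintype.card_option, Fintype.card_subtype_compl, Fintype.card_coe]

end PartialMap

theorem Finset.sum_univ_finset_apply_card {β M : Type*} [Fintype β] [AddCommMonoid M]
    (f : ℕ → M) :
    ∑ s : Finset β, f #s = ∑ k ∈ range (Fintype.card β + 1), (Fintype.card β).choose k • f k := by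
  rw [← powerset_univ, sum_powerset_apply_card, card_univ]

theorem numIdempotentsPartialTransformations (n : ℕ) :
    Fintype.card {e : Fin n → Option (Fin n) // pcomp e e = e} =
      ∑ k ∈ Finset.range (n + 1), Nat.choose n k * (k + 1) ^ (n - k) := by
  calc Fintype.card {e : Fin n → Option (Fin n) // pcomp e e = e}
      = Nat.card {e : Fin n → Option (Fin n) // FixesRange e} := by
        rw [← Nat.card_eq_fintype_card]
        exact Nat.card_congr (Equiv.subtypeEquivRight fun _ => bind_self_eq_self_iff_fixesRange)
    _ = ∑ s : Finset (Fin n), (#s + 1) ^ (n - #s) := by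
        rw [card_fixesRange, Fintype.card_fin]
    _ = ∑ k ∈ range (n + 1), n.choose k * (k + 1) ^ (n - k) := by
        simpa using sum_univ_finset_apply_card (β := Fin n) fun k => (k + 1) ^ (n - k)
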